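/- For every n ≥ 1, the polynomial p_n(x) = L_n(x) − (n(n+1)/((n+2)(n+3)))·L_{n+2}(x) is a nonzero polynomial of degree exactly n+2 whose derivative vanishes at both endpoints x = 1 and x = −1. -/
import Mathlib


open Polynomial

/-- For n ≥ 1, p_n = L_n − (n(n+1)/((n+2)(n+3))) L_{n+2} is a nonzero polynomial of degree
exactly n+2 whose derivative vanishes at x = 1 and x = −1, where L_k is the Legendre
polynomial of degree k (normalized with the stated derivative values and leading coefficient). -/
theorem stmt_3 (L : ℕ → Polynomial ℝ)
    (hdeg : ∀ k, (L k).natDegree = k)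
    (hlead : ∀ k : ℕ, (L k).leadingCoeff = (Nat.factorial (2*k) : ℝ) / (2^k * (Nat.factorial k)^2))
    (hL1 : ∀ k : ℕ, (derivative (L k)).eval 1 = (k : ℝ) * (k + 1) / 2)
    (hLm1 : ∀ k : ℕ, (derivative (L k)).eval (-1) = (-1 : ℝ) ^ (k - 1) * k * (k + 1) / 2)
    (n : ℕ) (hn : 1 ≤ n)
    (p : Polynomial ℝ)
    (hp : p = L n - C ((n : ℝ) * (n + 1) / ((n + 2) * (n + 3))) * L (n + 2)) :
    p ≠ 0 ∧ p.natDegree = n + 2 ∧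
    (derivative p).eval 1 = 0 ∧ (derivative p).eval (-1) = 0 := by
  obtain ⟨m, rfl⟩ : ∃ m, n = m + 1 := ⟨n - 1, (Nat.succ_pred_eq_of_pos hn).symm⟩
  set c : ℝ := ((m + 1 : ℕ) : ℝ) * ((m + 1 : ℕ) + 1) / (((m + 1 : ℕ) : ℝ) + 2) / (((m + 1 : ℕ) : ℝ) + 3) with hc'
  have hcval : ((m + 1 : ℕ) : ℝ) * (((m + 1 : ℕ) : ℝ) + 1) / ((((m + 1 : ℕ) : ℝ) + 2) * (((m + 1 : ℕ) : ℝ) + 3))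
      = ((m : ℝ) + 1) * ((m : ℝ) + 2) / (((m : ℝ) + 3) * ((m : ℝ) + 4)) := by
    push_cast; ring
  have hcne : ((m + 1 : ℕ) : ℝ) * (((m + 1 : ℕ) : ℝ) + 1) / ((((m + 1 : ℕ) : ℝ) + 2) * (((m + 1 : ℕ) : ℝ) + 3)) ≠ 0 := by
    rw [hcval]; positivity
  have hdegp : p.natDegree = m + 1 + 2 := by
    rw [hp, Polynomial.natDegree_sub_eq_right_of_natDegree_lt]
    · rw [natDegree_C_mul hcne, hdeg]
    · rw [natDegree_C_mul hcne, hdeg, hdeg]; omega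
  refine ⟨?_, hdegp, ?_, ?_⟩
  · intro h
    rw [h, natDegree_zero] at hdegp
    omega
  · rw [hp]
    simp only [derivative_sub, derivative_C_mul, eval_sub, eval_mul, eval_C, hL1, hcval]
    push_cast
    have h2 : ((m : ℝ) + 3) * ((m : ℝ) + 4) ≠ 0 := by positivity
    field_simp
    ring
  · rw [hp]
    simp only [derivative_sub, derivative_C_mul, eval_sub, eval_mul, eval_C, hLm1, hcval]
    have e1 : m + 1 - 1 = m := rfl
    have e2 : m + 1 + 2 - 1 = m + 2 := rfl
    rw [e1, e2]
    have hpow : ((-1 : ℝ)) ^ (m + 2) = (-1 : ℝ) ^ m := by ring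
    rw [hpow]
    push_cast
    have h2 : ((m : ℝ) + 3) * ((m : ℝ) + 4) ≠ 0 := by positivity
    field_simp
    ring
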